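/- arXiv:2202.10530 — 3 statements merged into one kernel-verified Lean document; each statement's English description precedes it below -/
import Mathlib

section
/- Let D be a positive integer, and let C = (ζ, r̂, r) and C' = (ζ', r̂', r') be circles in S_D whose underlying point sets in the extended complex plane are distinct. Suppose z ∈ ℂ lies on both C and C'. Let t = ⟨v_C, v_C'⟩_Q (necessarily t ∈ [−1, 1]) and set w = t + i·√(1 − t²) ∈ ℂ. Then z ∈ ι(K) if and only if w ∈ ι(K). -/
open Complex NumberField ComplexConjugate
open scoped nonZeroDivisors

noncomputable section

/-- `i·√t` for a real number `t` (so `isqrt |Δ| = √Δ` and `isqrt D = i√D`). -/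
def isqrt (t : ℝ) : ℂ := Complex.I * Real.sqrt t

/-- `(ζ, r̂, r)` is an oriented circle: `|ζ|² - r̂·r = 1`. -/
def IsOrientedCircle (ζ : ℂ) (rhat r : ℝ) : Prop :=
  Complex.normSq ζ - rhat * r = 1

/-- The point `z ∈ ℂ` lies on the oriented circle `(ζ, r̂, r)`:
`r·|z|² - 2·Re(conj z · ζ) + r̂ = 0`. -/
def LiesOn (z : ℂ) (ζ : ℂ) (rhat r : ℝ) : Prop :=
  r * Complex.normSq z - 2 * (conj z * ζ).re + rhat = 0

/-- Membership of the oriented circle `(ζ, r̂, r)` in the arrangement `S_D`: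
`i√D·ζ ∈ ι(𝒪)` and `i√D·r̂, i√D·r ∈ √Δ·ℤ`, where `√Δ = i√|Δ|`. -/
def MemSD (K : Type*) [Field K] [NumberField K] (ι : K →+* ℂ) (D : ℝ)
    (ζ : ℂ) (rhat r : ℝ) : Prop :=
  IsOrientedCircle ζ rhat r ∧
  (∃ a : 𝓞 K, ι (a : K) = isqrt D * ζ) ∧
  (∃ m : ℤ, isqrt D * (rhat : ℂ) = isqrt |(NumberField.discr K : ℝ)| * (m : ℂ)) ∧
  (∃ m : ℤ, isqrt D * (r : ℂ) = isqrt |(NumberField.discr K : ℝ)| * (m : ℂ))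

/-- The Minkowski pairing `⟨v_C, v_C'⟩_Q` of two oriented circles, a real number. -/
def pairingQ (ζ : ℂ) (rhat r : ℝ) (ζ' : ℂ) (rhat' r' : ℝ) : ℝ :=
  ((ζ * conj ζ' + conj ζ * ζ').re - rhat * r' - r * rhat') / 2

/-- The spin matrix `N(M)` of `M = [[α, γ], [β, δ]]`. -/
def spin (α β γ δ : ℂ) : Matrix (Fin 4) (Fin 4) ℂ :=
  !![α * conj δ, β * conj γ, α * conj γ, β * conj δ;
     conj β * γ, conj α * δ, conj α * γ, conj β * δ;
     α * conj β, conj α * β, (Complex.normSq α : ℂ), (Complex.normSq β : ℂ);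
     γ * conj δ, conj γ * δ, (Complex.normSq γ : ℂ), (Complex.normSq δ : ℂ)]

/-- The row vector `v_C = [ζ, conj ζ, r̂, r]` associated to an oriented circle. -/
def vC (ζ : ℂ) (rhat r : ℝ) : Fin 4 → ℂ := ![ζ, conj ζ, (rhat : ℂ), (r : ℂ)]

/-- The fractional ideal of `K` generated by two elements. -/
def gen2 (K : Type*) [Field K] [NumberField K] (x y : K) :
    FractionalIdeal (𝓞 K)⁰ K :=
  FractionalIdeal.spanSingleton (𝓞 K)⁰ x + FractionalIdeal.spanSingleton (𝓞 K)⁰ y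

/-- The fractional ideal of `K` generated by four elements (e.g. the entries of a
`2×2` matrix). -/
def gen4 (K : Type*) [Field K] [NumberField K] (a b c d : K) :
    FractionalIdeal (𝓞 K)⁰ K :=
  FractionalIdeal.spanSingleton (𝓞 K)⁰ a + FractionalIdeal.spanSingleton (𝓞 K)⁰ b +
    FractionalIdeal.spanSingleton (𝓞 K)⁰ c + FractionalIdeal.spanSingleton (𝓞 K)⁰ d

/-- The class of a fractional ideal in the class group of `K`
(junk value `1` for the zero ideal). -/
def classOf (K : Type*) [Field K] [NumberField K]
    (I : FractionalIdeal (𝓞 K)⁰ K) : ClassGroup (𝓞 K) :=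
  letI := Classical.dec (I = 0)
  if h : I = 0 then 1 else ClassGroup.mk K (Units.mk0 I h)

/-!
At a common point `z` the numbers `u = ζ - r z` and `u' = ζ' - r' z` have modulus one (they are
the normals of `C` and `C'` at `z`) and `Re (u ū') = t`, so `u ū'` is `w` or `w̄`; as `ι(K)` is
stable under conjugation, `w ∈ ι(K) ↔ u ū' ∈ ι(K)`. By the equation of `C`, `u ū' = A + B z`
where `A` and `B` are sums of products of two coordinates of `C`, `C'`. Each coordinate lies in
`(i√D)⁻¹ ι(K)` because `√Δ ∈ ι(K)` (`Δ` is the square of `det (σᵢ bⱼ)`, whose entries lie in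
`ι(K)` since `K/ℚ` is normal), so `A, B ∈ ι(K)`, and for `B ≠ 0` we get
`z ∈ ι(K) ↔ u ū' ∈ ι(K)`. If `B = 0`, either `C'` is a real multiple of `C`, which makes the
point sets equal and `r`, `r'` vanish together, or `C` and `C'` are non-parallel lines, whose
intersection point is `K`-rational, while `u ū' = A ∈ ι(K)`.
-/

theorem AlgHom.apply_mem_fieldRange_of_normal {F K L : Type*} [Field F] [Field K] [Field L]
    [Algebra F K] [Algebra F L] [Normal F K] (ι σ : K →ₐ[F] L) (x : K) :
    σ x ∈ ι.fieldRange := by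
  let := ι.toRingHom.toAlgebra
  have : IsScalarTower F K L := IsScalarTower.of_algebraMap_eq fun c => (ι.commutes c).symm
  exact ⟨σ.restrictNormal K x, σ.restrictNormal_commutes K x⟩

theorem isqrt_sq {t : ℝ} (ht : 0 ≤ t) : isqrt t ^ 2 = -t := by
  rw [isqrt, mul_pow, I_sq, ← ofReal_pow, Real.sq_sqrt ht]
  ring

theorem conj_isqrt (t : ℝ) : conj (isqrt t) = -isqrt t := by
  simp [isqrt]

theorem isqrt_ne_zero {t : ℝ} (ht : 0 < t) : isqrt t ≠ 0 := by
  simp [isqrt, Real.sqrt_ne_zero'.mpr ht]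

section Embedding

variable {K : Type*} [Field K] [NumberField K] [Normal ℚ K]

theorem conj_mem_fieldRange_of_normal (ι : K →+* ℂ) {x : ℂ} (hx : x ∈ ι.fieldRange) :
    conj x ∈ ι.fieldRange := by
  obtain ⟨y, rfl⟩ := hx
  exact ι.toRatAlgHom.apply_mem_fieldRange_of_normal ((starRingEnd ℂ).comp ι).toRatAlgHom y

theorem NumberField.exists_sq_eq_discr_of_normal (ι : K →+* ℂ) :
    ∃ y : K, ι y ^ 2 = (discr K : ℂ) := by
  classical
  have hcard : Fintype.card (Module.Free.ChooseBasisIndex ℤ (𝓞 K)) =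
      Fintype.card (K →ₐ[ℚ] ℂ) := by
    rw [AlgHom.card, ← Module.finrank_eq_card_chooseBasisIndex, RingOfIntegers.rank]
  let M := Algebra.embeddingsMatrixReindex ℚ ℂ (integralBasis K) (Fintype.equivOfCardEq hcard)
  have hM : ∀ i j, ∃ y, ι y = M i j := fun i j =>
    ι.toRatAlgHom.apply_mem_fieldRange_of_normal _ (integralBasis K i)
  choose N hN using hM
  refine ⟨(Matrix.of N).det, ?_⟩
  rw [RingHom.map_det, show ι.mapMatrix (Matrix.of N) = M from Matrix.ext hN,
    ← Algebra.discr_eq_det_embeddingsMatrixReindex_pow_two, ← coe_discr]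
  simp

theorem isqrt_abs_discr_mem_fieldRange (ι : K →+* ℂ) (hΔ : discr K < 0) :
    isqrt |(discr K : ℝ)| ∈ ι.fieldRange := by
  obtain ⟨y, hy⟩ := exists_sq_eq_discr_of_normal ι
  have hs : isqrt |(discr K : ℝ)| ^ 2 = discr K := by
    rw [isqrt_sq (abs_nonneg _), abs_of_neg (by exact_mod_cast hΔ)]
    push_cast
    ring
  rcases sq_eq_sq_iff_eq_or_eq_neg.mp (hs.trans hy.symm) with h | h
  · exact ⟨y, h.symm⟩
  · exact ⟨-y, by rw [map_neg, h]⟩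

end Embedding

theorem liesOn_iff {z ζ : ℂ} {rhat r : ℝ} :
    LiesOn z ζ rhat r ↔ (r : ℂ) * (z * conj z) - (conj z * ζ + z * conj ζ) + rhat = 0 := by
  have h2re : ((2 * (conj z * ζ).re : ℝ) : ℂ) = conj z * ζ + z * conj ζ := by
    rw [ofReal_mul, re_eq_add_conj]
    simp only [map_mul, conj_conj]
    push_cast
    ring
  rw [LiesOn, ← ofReal_inj, ← h2re, mul_conj]
  push_cast
  rfl

theorem isOrientedCircle_iff {ζ : ℂ} {rhat r : ℝ} :
    IsOrientedCircle ζ rhat r ↔ ζ * conj ζ - rhat * r = 1 := by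
  rw [IsOrientedCircle, ← ofReal_inj, mul_conj]
  push_cast
  rfl

theorem two_mul_pairingQ (ζ : ℂ) (rhat r : ℝ) (ζ' : ℂ) (rhat' r' : ℝ) :
    2 * (pairingQ ζ rhat r ζ' rhat' r' : ℂ) =
      ζ * conj ζ' + conj ζ * ζ' - rhat * r' - r * rhat' := by
  have hre : (((ζ * conj ζ' + conj ζ * ζ').re : ℝ) : ℂ) = ζ * conj ζ' + conj ζ * ζ' := by
    rw [← conj_eq_iff_re]
    simp only [map_add, map_mul, conj_conj]
    ring
  rw [pairingQ]
  push_cast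
  rw [hre]
  ring

/-- For `r ≠ 0` this is `(ζ / r - z) / (1 / r)`: the vector from `z` to the centre `ζ / r`
divided by the signed radius `1 / r`. -/
def unitNormal (ζ : ℂ) (r : ℝ) (z : ℂ) : ℂ := ζ - r * z

theorem unitNormal_mul_conj_self {z ζ : ℂ} {rhat r : ℝ} (ho : IsOrientedCircle ζ rhat r)
    (hz : LiesOn z ζ rhat r) : unitNormal ζ r z * conj (unitNormal ζ r z) = 1 := by
  rw [isOrientedCircle_iff] at ho
  rw [liesOn_iff] at hz
  simp only [unitNormal, map_sub, map_mul, conj_ofReal]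
  linear_combination ho + (r : ℂ) * hz

theorem normSq_unitNormal {z ζ : ℂ} {rhat r : ℝ} (ho : IsOrientedCircle ζ rhat r)
    (hz : LiesOn z ζ rhat r) : normSq (unitNormal ζ r z) = 1 := by
  exact_mod_cast (mul_conj _).symm.trans (unitNormal_mul_conj_self ho hz)

theorem unitNormal_mul_conj {z ζ ζ' : ℂ} {rhat r : ℝ} (r' : ℝ) (hz : LiesOn z ζ rhat r) :
    unitNormal ζ r z * conj (unitNormal ζ' r' z) =
      (ζ * conj ζ' - r' * rhat) + (r' * conj ζ - r * conj ζ') * z := by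
  rw [liesOn_iff] at hz
  simp only [unitNormal, map_sub, map_mul, conj_ofReal]
  linear_combination (r' : ℂ) * hz

theorem re_unitNormal_mul_conj {z ζ ζ' : ℂ} {rhat r rhat' r' : ℝ} (hz : LiesOn z ζ rhat r)
    (hz' : LiesOn z ζ' rhat' r') :
    (unitNormal ζ r z * conj (unitNormal ζ' r' z)).re = pairingQ ζ rhat r ζ' rhat' r' := by
  rw [liesOn_iff] at hz hz'
  apply ofReal_injective
  rw [re_eq_add_conj, ← mul_right_inj' (two_ne_zero' ℂ), two_mul_pairingQ]
  simp only [unitNormal, map_sub, map_mul, conj_ofReal, conj_conj]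
  linear_combination (r' : ℂ) * hz + (r : ℂ) * hz'

theorem eq_or_conj_eq_of_normSq_eq_one {v : ℂ} (hv : normSq v = 1) :
    v = v.re + I * √(1 - v.re ^ 2) ∨ conj v = v.re + I * √(1 - v.re ^ 2) := by
  have him : √(1 - v.re ^ 2) = |v.im| := by
    rw [← Real.sqrt_sq_eq_abs, ← hv, normSq_apply]
    ring_nf
  rw [him]
  rcases abs_cases v.im with ⟨h, -⟩ | ⟨h, -⟩
  · left
    apply Complex.ext <;> simp [h]
  · right
    apply Complex.ext <;> simp [h]

theorem liesOn_smul_iff {z ζ : ℂ} {rhat r ε : ℝ} (hε : ε ≠ 0) :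
    LiesOn z (ε * ζ) (ε * rhat) (ε * r) ↔ LiesOn z ζ rhat r := by
  have hre : (conj z * (ε * ζ)).re = ε * (conj z * ζ).re := by
    rw [mul_left_comm, re_ofReal_mul]
  have hfac : ε * r * normSq z - 2 * (ε * (conj z * ζ).re) + ε * rhat =
      ε * (r * normSq z - 2 * (conj z * ζ).re + rhat) := by ring
  rw [LiesOn, LiesOn, hre, hfac, mul_eq_zero, or_iff_right hε]

theorem setOf_liesOn_eq_of_proportional {z ζ ζ' : ℂ} {rhat r rhat' r' ε : ℝ}
    (ho' : IsOrientedCircle ζ' rhat' r') (hζ : ζ' = ε * ζ) (hr : r' = ε * r)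
    (hz : LiesOn z ζ rhat r) (hz' : LiesOn z ζ' rhat' r') :
    {z : ℂ | LiesOn z ζ rhat r} = {z : ℂ | LiesOn z ζ' rhat' r'} ∧ (r = 0 ↔ r' = 0) := by
  have hε : ε ≠ 0 := by
    rintro rfl
    simp [IsOrientedCircle, hζ, hr] at ho'
  have hrhat : rhat' = ε * rhat := by
    rw [liesOn_iff] at hz hz'
    rw [hζ, hr, map_mul, conj_ofReal] at hz'
    push_cast at hz'
    apply ofReal_injective
    push_cast
    linear_combination hz' - (ε : ℂ) * hz
  subst hζ hr hrhat
  refine ⟨Set.ext fun w => (liesOn_smul_iff hε).symm, ?_⟩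
  simp [hε]

theorem Subfield.add_mul_mem_iff {L : Type*} [Field L] {F : Subfield L} {a b z : L}
    (ha : a ∈ F) (hb : b ∈ F) (hb0 : b ≠ 0) : a + b * z ∈ F ↔ z ∈ F := by
  rw [add_mem_cancel_left ha]
  exact ⟨fun h => by simpa [hb0] using F.div_mem h hb, F.mul_mem hb⟩

theorem Subfield.mul_mem_of_mul_mem {L : Type*} [Field L] {F : Subfield L} {d : L}
    (hd0 : d ≠ 0) (hd2 : d ^ 2 ∈ F) {x y : L} (hx : d * x ∈ F) (hy : d * y ∈ F) : x * y ∈ F := by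
  have h := F.div_mem (F.mul_mem hx hy) hd2
  rwa [show d * x * (d * y) / d ^ 2 = x * y by field_simp] at h

section ScaledSubfield

variable {F : Subfield ℂ} {d : ℂ}

/-- Circles in `S_D` satisfy this for `F = ι(K)` and `d = i√D`. -/
def CoordsMemScaled (F : Subfield ℂ) (d ζ : ℂ) (rhat r : ℝ) : Prop :=
  d * ζ ∈ F ∧ d * rhat ∈ F ∧ d * r ∈ F

theorem mul_conj_mem_of_mul_mem (hF : ∀ x ∈ F, conj x ∈ F) (hd : conj d = -d) {x : ℂ}
    (hx : d * x ∈ F) : d * conj x ∈ F := by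
  have h := F.neg_mem (hF _ hx)
  rwa [map_mul, hd, neg_mul, neg_neg] at h

theorem mem_iff_mem_of_normSq_eq_one (hF : ∀ x ∈ F, conj x ∈ F) {v : ℂ} (hv : normSq v = 1) :
    v ∈ F ↔ (v.re : ℂ) + I * √(1 - v.re ^ 2) ∈ F := by
  rcases eq_or_conj_eq_of_normSq_eq_one hv with h | h
  · rw [← h]
  · rw [← h]
    exact ⟨hF v, fun h' => by simpa using hF _ h'⟩

theorem exists_proportional_or_mem_of_lines (hF : ∀ x ∈ F, conj x ∈ F) (hd0 : d ≠ 0)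
    (hd : conj d = -d) (hd2 : d ^ 2 ∈ F) {z ζ ζ' : ℂ} {rhat rhat' : ℝ}
    (ho : IsOrientedCircle ζ rhat 0) (hC : CoordsMemScaled F d ζ rhat 0)
    (hC' : CoordsMemScaled F d ζ' rhat' 0) (hz : LiesOn z ζ rhat 0) (hz' : LiesOn z ζ' rhat' 0) :
    (∃ ε : ℝ, ζ' = ε * ζ) ∨ z ∈ F := by
  rw [isOrientedCircle_iff] at ho
  rw [liesOn_iff] at hz hz'
  simp only [ofReal_zero, zero_mul, mul_zero, sub_zero, zero_sub] at ho hz hz'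
  by_cases hpar : conj ζ * ζ' - ζ * conj ζ' = 0
  · left
    refine ⟨(ζ' * conj ζ).re, ?_⟩
    have hreal : ((ζ' * conj ζ).re : ℂ) = ζ' * conj ζ := by
      rw [← conj_eq_iff_re, map_mul, conj_conj]
      linear_combination -hpar
    rw [hreal]
    linear_combination -ζ' * ho
  · right
    have hzeq : z = (rhat * ζ' - rhat' * ζ) / (conj ζ * ζ' - ζ * conj ζ') := by
      rw [eq_div_iff hpar]
      linear_combination (-ζ') * hz + ζ * hz'
    have hmul {x y : ℂ} : d * x ∈ F → d * y ∈ F → x * y ∈ F :=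
      Subfield.mul_mem_of_mul_mem hd0 hd2
    have hconj {x : ℂ} : d * x ∈ F → d * conj x ∈ F := mul_conj_mem_of_mul_mem hF hd
    rw [hzeq]
    exact F.div_mem (F.sub_mem (hmul hC.2.1 hC'.1) (hmul hC'.2.1 hC.1))
      (F.sub_mem (hmul (hconj hC.1) hC'.1) (hmul hC.1 (hconj hC'.1)))

theorem exists_proportional_or_mem (hF : ∀ x ∈ F, conj x ∈ F) (hd0 : d ≠ 0)
    (hd : conj d = -d) (hd2 : d ^ 2 ∈ F) {z ζ ζ' : ℂ} {rhat r rhat' r' : ℝ}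
    (ho : IsOrientedCircle ζ rhat r) (hC : CoordsMemScaled F d ζ rhat r)
    (hC' : CoordsMemScaled F d ζ' rhat' r') (hz : LiesOn z ζ rhat r) (hz' : LiesOn z ζ' rhat' r')
    (hB : (r' : ℂ) * conj ζ - r * conj ζ' = 0) :
    (∃ ε : ℝ, ζ' = ε * ζ ∧ r' = ε * r) ∨ z ∈ F := by
  by_cases hr : r = 0
  · subst hr
    have hζ : ζ ≠ 0 := by
      rintro rfl
      simp [IsOrientedCircle] at ho
    have hr' : r' = 0 := by simpa [hζ] using hB
    subst hr'
    exact (exists_proportional_or_mem_of_lines hF hd0 hd hd2 ho hC hC' hz hz').imp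
      (fun ⟨ε, hε⟩ => ⟨ε, hε, by simp⟩) id
  · left
    refine ⟨r' / r, ?_, by field_simp⟩
    have hB' := congrArg conj hB
    simp only [map_sub, map_mul, conj_ofReal, conj_conj, map_zero] at hB'
    rw [ofReal_div, div_mul_eq_mul_div, eq_div_iff (ofReal_ne_zero.mpr hr)]
    linear_combination -hB'

theorem mem_iff_mem_of_coordsMemScaled (hF : ∀ x ∈ F, conj x ∈ F) (hd0 : d ≠ 0)
    (hd : conj d = -d) (hd2 : d ^ 2 ∈ F) {z ζ ζ' : ℂ} {rhat r rhat' r' : ℝ}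
    (ho : IsOrientedCircle ζ rhat r) (ho' : IsOrientedCircle ζ' rhat' r')
    (hC : CoordsMemScaled F d ζ rhat r) (hC' : CoordsMemScaled F d ζ' rhat' r')
    (hne : {z : ℂ | LiesOn z ζ rhat r} ≠ {z : ℂ | LiesOn z ζ' rhat' r'} ∨ ¬(r = 0 ↔ r' = 0))
    (hz : LiesOn z ζ rhat r) (hz' : LiesOn z ζ' rhat' r') :
    z ∈ F ↔ (pairingQ ζ rhat r ζ' rhat' r' : ℂ) +
      I * √(1 - pairingQ ζ rhat r ζ' rhat' r' ^ 2) ∈ F := by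
  have hv : normSq (unitNormal ζ r z * conj (unitNormal ζ' r' z)) = 1 := by
    rw [normSq_mul, normSq_conj, normSq_unitNormal ho hz, normSq_unitNormal ho' hz', one_mul]
  rw [← re_unitNormal_mul_conj hz hz', ← mem_iff_mem_of_normSq_eq_one hF hv,
    unitNormal_mul_conj r' hz]
  have hmul {x y : ℂ} : d * x ∈ F → d * y ∈ F → x * y ∈ F :=
    Subfield.mul_mem_of_mul_mem hd0 hd2
  have hconj {x : ℂ} : d * x ∈ F → d * conj x ∈ F := mul_conj_mem_of_mul_mem hF hd
  have hA : ζ * conj ζ' - r' * rhat ∈ F :=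
    F.sub_mem (hmul hC.1 (hconj hC'.1)) (hmul hC'.2.2 hC.2.1)
  have hB : (r' : ℂ) * conj ζ - r * conj ζ' ∈ F :=
    F.sub_mem (hmul hC'.2.2 (hconj hC.1)) (hmul hC.2.2 (hconj hC'.1))
  by_cases hB0 : (r' : ℂ) * conj ζ - r * conj ζ' = 0
  · rcases exists_proportional_or_mem hF hd0 hd hd2 ho hC hC' hz hz' hB0 with
      ⟨ε, hζ, hr⟩ | hzF
    · have hsame := setOf_liesOn_eq_of_proportional ho' hζ hr hz hz'
      exact (hne.elim (· hsame.1) (· hsame.2)).elim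
    · simp [hB0, hA, hzF]
  · exact (Subfield.add_mul_mem_iff hA hB hB0).symm

end ScaledSubfield

theorem MemSD.coordsMemScaled {K : Type*} [Field K] [NumberField K] {ι : K →+* ℂ} {D : ℝ}
    {ζ : ℂ} {rhat r : ℝ} (h : MemSD K ι D ζ rhat r)
    (hs : isqrt |(discr K : ℝ)| ∈ ι.fieldRange) :
    CoordsMemScaled ι.fieldRange (isqrt D) ζ rhat r := by
  obtain ⟨-, ⟨a, ha⟩, ⟨m, hm⟩, ⟨n, hn⟩⟩ := h
  exact ⟨⟨a, ha⟩, hm ▸ mul_mem hs (intCast_mem _ m), hn ▸ mul_mem hs (intCast_mem _ n)⟩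

theorem stmt_3_general (K : Type*) [Field K] [NumberField K] (ι : K →+* ℂ)
    (hdeg : Module.finrank ℚ K = 2)
    (hΔ : NumberField.discr K < 0)
    (D : ℕ) (hD : 0 < D) (ζ : ℂ) (rhat r : ℝ) (ζ' : ℂ) (rhat' r' : ℝ)
    (hC : MemSD K ι D ζ rhat r) (hC' : MemSD K ι D ζ' rhat' r')
    (hne : {z : ℂ | LiesOn z ζ rhat r} ≠ {z : ℂ | LiesOn z ζ' rhat' r'} ∨ ¬(r = 0 ↔ r' = 0))
    (z : ℂ) (hz : LiesOn z ζ rhat r) (hz' : LiesOn z ζ' rhat' r') :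
    (∃ a : K, ι a = z) ↔
      ∃ a : K, ι a = (pairingQ ζ rhat r ζ' rhat' r' : ℂ) +
        Complex.I * Real.sqrt (1 - pairingQ ζ rhat r ζ' rhat' r' ^ 2) := by
  have : Normal ℚ K := by
    have : Algebra.IsQuadraticExtension ℚ K := ⟨hdeg⟩
    infer_instance
  have hD' : (0 : ℝ) < D := by exact_mod_cast hD
  have hs := isqrt_abs_discr_mem_fieldRange ι hΔ
  have hd2 : isqrt D ^ 2 ∈ ι.fieldRange := by
    rw [isqrt_sq hD'.le]
    exact neg_mem (natCast_mem _ D)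
  exact mem_iff_mem_of_coordsMemScaled (fun _ => conj_mem_fieldRange_of_normal ι)
    (isqrt_ne_zero hD') (conj_isqrt _) hd2 hC.1 hC'.1 (hC.coordsMemScaled hs)
    (hC'.coordsMemScaled hs) hne hz hz'

theorem stmt_3 (K : Type*) [Field K] [NumberField K] (ι : K →+* ℂ)
    (hdeg : Module.finrank ℚ K = 2) (him : ∃ x : K, (ι x).im ≠ 0)
    (hΔ : NumberField.discr K < 0)
    (D : ℕ) (hD : 0 < D) (ζ : ℂ) (rhat r : ℝ) (ζ' : ℂ) (rhat' r' : ℝ)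
    (hC : MemSD K ι D ζ rhat r) (hC' : MemSD K ι D ζ' rhat' r')
    (hne : {z : ℂ | LiesOn z ζ rhat r} ≠ {z : ℂ | LiesOn z ζ' rhat' r'} ∨ ¬(r = 0 ↔ r' = 0))
    (z : ℂ) (hz : LiesOn z ζ rhat r) (hz' : LiesOn z ζ' rhat' r') :
    (∃ a : K, ι a = z) ↔
      ∃ a : K, ι a = (pairingQ ζ rhat r ζ' rhat' r' : ℂ) +
        Complex.I * Real.sqrt (1 - pairingQ ζ rhat r ζ' rhat' r' ^ 2) :=
  stmt_3_general K ι hdeg hΔ D hD ζ rhat r ζ' rhat' r' hC hC' hne z hz hz'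
end
end

section
/- Let D be a positive integer. If there exist a circle C ∈ S_D and a point z ∈ ι(K) lying on C, then there exist rational numbers x, y, w, not all zero, with D·x² + Δ·y² = w². -/
open Complex NumberField ComplexConjugate
open scoped nonZeroDivisors

noncomputable section

/-!
If `z` lies on the oriented circle `(ζ, r̂, r)` then `|r z - ζ|² = 1`, so `ξ = i√D (r z - ζ)` has
`|ξ|² = D`. The integrality conditions give `ξ = √Δ m z - ι a`, which lies in `ι K` because
`√Δ ∈ ι K`: for any `θ ∈ K` with `ι θ ∉ ℝ`, the discriminant `(ι θ - conj (ι θ))²` of the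
`ℚ`-basis `1, θ` is a nonzero rational square times `Δ`. Writing `ξ = p + q √Δ` with
`p, q ∈ ℚ` yields `D = p² - Δ q²`, i.e. `(x, y, w) = (1, q, p)`.
-/

theorem Algebra.discr_eq_det_toMatrix_sq_mul {A B ι : Type*} [CommRing A] [CommRing B]
    [Algebra A B] [Fintype ι] [DecidableEq ι] (b b' : Module.Basis ι A B) :
    Algebra.discr A b = (b'.toMatrix b).det ^ 2 * Algebra.discr A b' := by
  conv_lhs => rw [← b'.toMatrix_map_vecMul b]
  exact Algebra.discr_of_matrix_vecMul _ _

theorem NumberField.exists_discr_basis_eq_sq_mul_discr {K ι : Type*} [Field K] [NumberField K]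
    [Fintype ι] [DecidableEq ι] (b : Module.Basis ι ℚ K) :
    ∃ c : ℚ, c ≠ 0 ∧ Algebra.discr ℚ b = c ^ 2 * discr K := by
  let e := b.indexEquiv (integralBasis K)
  let ib := (integralBasis K).reindex e.symm
  refine ⟨(ib.toMatrix b).det, ?_, ?_⟩
  · rw [← Module.Basis.det_apply]
    exact (ib.isUnit_det b).ne_zero
  · rw [Algebra.discr_eq_det_toMatrix_sq_mul b ib, coe_discr, Module.Basis.coe_reindex,
      Algebra.discr_reindex]

section ImaginaryQuadratic

variable {K : Type*} [Field K] [NumberField K] (ι : K →+* ℂ)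

theorem linearIndependent_one_of_im_ne_zero {θ : K} (hθ : (ι θ).im ≠ 0) :
    LinearIndependent ℚ ![(1 : K), θ] := by
  rw [LinearIndependent.pair_iff]
  intro p q hpq
  have him : (q : ℝ) * (ι θ).im = 0 := by
    simpa [Rat.smul_def] using congrArg (fun x => (ι x).im) hpq
  obtain rfl : q = 0 := by exact_mod_cast (mul_eq_zero.1 him).resolve_right hθ
  simpa using hpq

theorem exists_rat_map_eq_add_mul (hdeg : Module.finrank ℚ K = 2) {θ : K}
    (hθ : (ι θ).im ≠ 0) (x : K) : ∃ p q : ℚ, ι x = p + q * ι θ := by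
  have hspan := (linearIndependent_one_of_im_ne_zero ι hθ).span_eq_top_of_card_eq_finrank
    (by simp [hdeg])
  rw [Matrix.range_cons, Matrix.range_cons, Matrix.range_empty, Set.union_empty,
    Set.singleton_union] at hspan
  obtain ⟨p, q, hx⟩ := Submodule.mem_span_pair.1 (hspan ▸ Submodule.mem_top (x := x))
  exact ⟨p, q, by simp [← hx, Rat.smul_def]⟩

theorem toRatAlgHom_ne_conj_comp {θ : K} (hθ : (ι θ).im ≠ 0) :
    ι.toRatAlgHom ≠ ((starRingEnd ℂ).comp ι).toRatAlgHom := by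
  intro h
  have := congrArg (fun σ : K →ₐ[ℚ] ℂ => (σ θ).im) h
  simp only [RingHom.toRatAlgHom_apply, RingHom.coe_comp, Function.comp_apply,
    Complex.conj_im] at this
  exact hθ (by linarith)

open scoped Classical in
theorem univ_algHom_eq_pair (hdeg : Module.finrank ℚ K = 2) {θ : K} (hθ : (ι θ).im ≠ 0) :
    (Finset.univ : Finset (K →ₐ[ℚ] ℂ)) =
      {ι.toRatAlgHom, ((starRingEnd ℂ).comp ι).toRatAlgHom} := by
  refine (Finset.eq_of_subset_of_card_le (Finset.subset_univ _) ?_).symm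
  rw [Finset.card_univ, AlgHom.card, hdeg, Finset.card_pair (toRatAlgHom_ne_conj_comp ι hθ)]

theorem algebraMap_trace_eq_add_conj (hdeg : Module.finrank ℚ K = 2) {θ : K}
    (hθ : (ι θ).im ≠ 0) (x : K) :
    algebraMap ℚ ℂ (Algebra.trace ℚ K x) = ι x + conj (ι x) := by
  classical
  rw [trace_eq_sum_embeddings ℂ, univ_algHom_eq_pair ι hdeg hθ,
    Finset.sum_pair (toRatAlgHom_ne_conj_comp ι hθ)]
  rfl

theorem algebraMap_discr_one_eq_sq (hdeg : Module.finrank ℚ K = 2) {θ : K}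
    (hθ : (ι θ).im ≠ 0) :
    algebraMap ℚ ℂ (Algebra.discr ℚ ![1, θ]) = (ι θ - conj (ι θ)) ^ 2 := by
  rw [Algebra.discr_def, RingHom.map_det, Matrix.det_fin_two]
  simp [Algebra.traceMatrix_apply, RingHom.mapMatrix_apply, algebraMap_trace_eq_add_conj ι hdeg hθ]
  ring

theorem exists_rat_discr_mul_sq_eq (hdeg : Module.finrank ℚ K = 2) {θ : K}
    (hθ : (ι θ).im ≠ 0) :
    ∃ c : ℚ, c ≠ 0 ∧ (discr K : ℝ) * c ^ 2 = -(2 * (ι θ).im) ^ 2 := by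
  have hli := linearIndependent_one_of_im_ne_zero ι hθ
  have hcard : Fintype.card (Fin 2) = Module.finrank ℚ K := by simp [hdeg]
  obtain ⟨c, hc, hdiscr⟩ :=
    exists_discr_basis_eq_sq_mul_discr (basisOfLinearIndependentOfCardEqFinrank hli hcard)
  rw [coe_basisOfLinearIndependentOfCardEqFinrank] at hdiscr
  refine ⟨c, hc, Complex.ofReal_injective ?_⟩
  have h := algebraMap_discr_one_eq_sq ι hdeg hθ
  rw [hdiscr] at h
  have hsub : ι θ - conj (ι θ) = 2 * (ι θ).im * I := by
    apply Complex.ext <;> simp; ring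
  rw [hsub, map_mul, map_pow, eq_ratCast, eq_ratCast, Rat.cast_intCast] at h
  push_cast
  linear_combination h + 4 * ((ι θ).im : ℂ) ^ 2 * I_sq

theorem exists_map_eq_isqrt_abs_discr (hdeg : Module.finrank ℚ K = 2)
    (him : ∃ θ : K, (ι θ).im ≠ 0) : ∃ δ : K, ι δ = isqrt |(discr K : ℝ)| := by
  obtain ⟨θ, hθ⟩ := him
  obtain ⟨c, hc, hΔc⟩ := exists_rat_discr_mul_sq_eq ι hdeg hθ
  have hc' : (c : ℝ) ≠ 0 := by exact_mod_cast hc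
  have hΔ : (discr K : ℝ) ≤ 0 := by
    nlinarith [sq_nonneg (2 * (ι θ).im), sq_pos_of_ne_zero hc']
  have hsq : (√|(discr K : ℝ)| * c) ^ 2 = (2 * (ι θ).im) ^ 2 := by
    rw [mul_pow, Real.sq_sqrt (abs_nonneg _), abs_of_nonpos hΔ]
    linarith
  obtain ⟨e, he⟩ : ∃ e : ℚ, √|(discr K : ℝ)| = e * (ι θ).im := by
    rcases sq_eq_sq_iff_eq_or_eq_neg.1 hsq with h | h
    · exact ⟨2 / c, by push_cast; field_simp; linarith⟩
    · exact ⟨-2 / c, by push_cast; field_simp; linarith⟩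
  obtain ⟨t, ht⟩ : ∃ t : ℚ, (t : ℝ) = (ι θ).re := by
    refine ⟨Algebra.trace ℚ K θ / 2, ?_⟩
    have := congrArg re (algebraMap_trace_eq_add_conj ι hdeg hθ θ)
    simp only [eq_ratCast, ratCast_re, add_re, conj_re] at this
    push_cast
    linarith
  refine ⟨e • (θ - t), ?_⟩
  rw [isqrt, he]
  apply Complex.ext <;> simp [Rat.smul_def, ht]

theorem exists_rat_map_eq_add_mul_isqrt (hdeg : Module.finrank ℚ K = 2)
    (him : ∃ θ : K, (ι θ).im ≠ 0) (x : K) :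
    ∃ p q : ℚ, ι x = p + q * isqrt |(discr K : ℝ)| := by
  obtain ⟨δ, hδ⟩ := exists_map_eq_isqrt_abs_discr ι hdeg him
  have hδ_im : (ι δ).im ≠ 0 := by
    simp [hδ, isqrt, discr_ne_zero]
  simpa [hδ] using exists_rat_map_eq_add_mul ι hdeg hδ_im x

end ImaginaryQuadratic

theorem normSq_add_mul_isqrt (p q : ℝ) {t : ℝ} (ht : 0 ≤ t) :
    normSq (p + q * isqrt t) = p ^ 2 + q ^ 2 * t := by
  simp only [normSq_apply, isqrt, add_re, add_im, mul_re, mul_im, ofReal_re, ofReal_im, I_re,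
    I_im]
  linear_combination q ^ 2 * Real.sq_sqrt ht

theorem normSq_isqrt {t : ℝ} (ht : 0 ≤ t) : normSq (isqrt t) = t := by
  rw [isqrt, map_mul, normSq_I, one_mul, normSq_ofReal, Real.mul_self_sqrt ht]

theorem normSq_mul_sub_eq_one_of_liesOn {z ζ : ℂ} {rhat r : ℝ}
    (hC : IsOrientedCircle ζ rhat r) (hz : LiesOn z ζ rhat r) :
    normSq (r * z - ζ) = 1 := by
  unfold IsOrientedCircle at hC
  unfold LiesOn at hz
  rw [normSq_apply] at hC hz ⊢
  simp only [sub_re, sub_im, mul_re, mul_im, ofReal_re, ofReal_im, conj_re, conj_im] at hz ⊢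
  linear_combination r * hz + hC

theorem stmt_4_general (K : Type*) [Field K] [NumberField K] (ι : K →+* ℂ)
    (hdeg : Module.finrank ℚ K = 2) (him : ∃ x : K, (ι x).im ≠ 0)
    (hΔ : NumberField.discr K < 0)
    (D : ℕ)
    (h : ∃ (ζ : ℂ) (rhat r : ℝ) (α : K), MemSD K ι D ζ rhat r ∧ LiesOn (ι α) ζ rhat r) :
    ∃ x y w : ℚ, ¬(x = 0 ∧ y = 0 ∧ w = 0) ∧
      (D : ℚ) * x ^ 2 + (NumberField.discr K : ℚ) * y ^ 2 = w ^ 2 := by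
  obtain ⟨ζ, rhat, r, α, ⟨hC, ⟨a, ha⟩, -, ⟨n, hn⟩⟩, hz⟩ := h
  obtain ⟨δ, hδ⟩ := exists_map_eq_isqrt_abs_discr ι hdeg him
  obtain ⟨p, q, hpq⟩ := exists_rat_map_eq_add_mul_isqrt ι hdeg him (n * δ * α - a)
  have hξ : ι (n * δ * α - a) = isqrt D * (r * ι α - ζ) := by
    rw [mul_sub, ← mul_assoc, hn, ← ha, map_sub, map_mul, map_mul, hδ, map_intCast]
    ring
  have hnorm := normSq_add_mul_isqrt p q (abs_nonneg (discr K : ℝ))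
  rw [ofReal_ratCast, ofReal_ratCast, ← hpq, hξ, map_mul, normSq_isqrt (Nat.cast_nonneg D),
    normSq_mul_sub_eq_one_of_liesOn hC hz, mul_one, abs_of_neg (by exact_mod_cast hΔ)] at hnorm
  refine ⟨1, q, p, by simp, ?_⟩
  exact_mod_cast (by linarith : (D : ℝ) * 1 ^ 2 + (discr K : ℝ) * (q : ℝ) ^ 2 = (p : ℝ) ^ 2)

theorem stmt_4 (K : Type*) [Field K] [NumberField K] (ι : K →+* ℂ)
    (hdeg : Module.finrank ℚ K = 2) (him : ∃ x : K, (ι x).im ≠ 0)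
    (hΔ : NumberField.discr K < 0)
    (D : ℕ) (hD : 0 < D)
    (h : ∃ (ζ : ℂ) (rhat r : ℝ) (α : K), MemSD K ι D ζ rhat r ∧ LiesOn (ι α) ζ rhat r) :
    ∃ x y w : ℚ, ¬(x = 0 ∧ y = 0 ∧ w = 0) ∧
      (D : ℚ) * x ^ 2 + (NumberField.discr K : ℚ) * y ^ 2 = w ^ 2 :=
  stmt_4_general K ι hdeg him hΔ D h
end
end

section
/- Let D be a positive integer dividing Δ. Then for all oriented circles C = (ζ, r̂, r) and C' = (ζ', r̂', r') in S_D, the real number 2·⟨v_C, v_C'⟩_Q = ζ·conj(ζ') + conj(ζ)·ζ' − r̂·r' − r·r̂' is an integer. (This is the superintegrality criterion: all subsets of S_D are superintegral.) -/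
open Complex NumberField ComplexConjugate
open scoped nonZeroDivisors

noncomputable section

/-
Put `a = i√D·ζ`, `a' = i√D·ζ'` (elements of `𝒪`) and `√D·r̂ = √|Δ|·m₁`, `√D·r = √|Δ|·m₂`,
and likewise `m₁'`, `m₂'` for `C'`. Then `D·(ζζ̄' + ζ̄ζ' - r̂r' - rr̂') = t - |Δ|(m₁m₂' + m₂m₁')`
with `t = aā' + āa'`, and the circle condition gives `N(a) = D + |Δ|m₁m₂`, so `D` divides
`N(a)`, `N(a')` and `|Δ|`; it remains to show that `D` divides `t`.
For `x, y ∈ 𝒪` both `x - x̄` and `y - ȳ` are integer multiples of one square root of `Δ`, so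
`(x - x̄)(y - ȳ) ∈ Δℤ`. The identity
`t² + (a - ā)(a' - ā')·t = 4N(a)N(a') + N(a)(a' - ā')² + N(a')(a - ā)²`
then shows `D² ∣ t² + c·t` with `D ∣ c`: `t / D` is a root of a monic integer quadratic,
hence an integer.
-/

open Polynomial in
theorem dvd_of_sq_dvd_sq_add_mul {R : Type*} [CommRing R] [IsDomain R] [IsIntegrallyClosed R]
    {d c t : R} (hc : d ∣ c) (h : d ^ 2 ∣ t ^ 2 + c * t) : d ∣ t := by
  obtain ⟨c', rfl⟩ := hc
  obtain ⟨e, he⟩ := h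
  by_cases hd : d = 0
  · subst hd
    simpa using he
  have hd' : algebraMap R (FractionRing R) d ≠ 0 :=
    (map_ne_zero_iff _ (IsFractionRing.injective R _)).mpr hd
  have hint : IsIntegral R (algebraMap R (FractionRing R) t / algebraMap R _ d) := by
    refine ⟨X ^ 2 + C c' * X - C e, ?_, ?_⟩
    · monicity!
    · have := congrArg (algebraMap R (FractionRing R)) he
      simp only [map_add, map_mul, map_pow] at this
      simp only [eval₂_sub, eval₂_add, eval₂_mul, eval₂_X_pow, eval₂_C, eval₂_X]
      field_simp
      linear_combination this
  obtain ⟨k, hk⟩ := IsIntegrallyClosed.algebraMap_eq_of_integral hint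
  exact ⟨k, IsFractionRing.injective R (FractionRing R) 
    (by rw [map_mul, hk, mul_div_cancel₀ _ hd'])⟩

namespace NumberField.ComplexEmbedding

variable {K : Type*} [Field K] [NumberField K] {ι : K →+* ℂ}

theorem exists_equiv_fin_two_algHom (hdeg : Module.finrank ℚ K = 2) (hι : ¬ IsReal ι) :
    ∃ e : Fin 2 ≃ (K →ₐ[ℚ] ℂ), e 0 = ι.toRatAlgHom ∧ e 1 = (conjugate ι).toRatAlgHom := by
  have hne : ι.toRatAlgHom ≠ (conjugate ι).toRatAlgHom := fun h ↦
    hι (isReal_iff.mpr (RingHom.ext fun x ↦ (AlgHom.congr_fun h x).symm))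
  have hinj : Function.Injective ![ι.toRatAlgHom, (conjugate ι).toRatAlgHom] := by
    intro i j hij
    fin_cases i <;> fin_cases j <;> simp_all [eq_comm]
  have hcard : Fintype.card (K →ₐ[ℚ] ℂ) = Fintype.card (Fin 2) := by
    rw [AlgHom.card, hdeg, Fintype.card_fin]
  exact ⟨Equiv.ofBijective _ ((Fintype.bijective_iff_injective_and_card _).mpr ⟨hinj, hcard.symm⟩),
    rfl, rfl⟩

theorem algebraMap_norm_eq_mul_conj (hdeg : Module.finrank ℚ K = 2) (hι : ¬ IsReal ι) (x : K) :
    algebraMap ℚ ℂ (Algebra.norm ℚ x) = ι x * conj (ι x) := by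
  obtain ⟨e, he₀, he₁⟩ := exists_equiv_fin_two_algHom hdeg hι
  rw [Algebra.norm_eq_prod_embeddings ℚ ℂ, ← e.prod_comp, Fin.prod_univ_two, he₀, he₁]
  rfl

theorem mul_conj_eq_norm_int (hdeg : Module.finrank ℚ K = 2) (hι : ¬ IsReal ι) (x : 𝓞 K) :
    ι x * conj (ι x) = (Algebra.norm ℤ x : ℂ) := by
  rw [← algebraMap_norm_eq_mul_conj hdeg hι, ← Algebra.coe_norm_int]
  simp

theorem exists_basis_discr_eq_sq (hdeg : Module.finrank ℚ K = 2) (hι : ¬ IsReal ι) :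
    ∃ B : Module.Basis (Fin 2) ℤ (𝓞 K),
      (discr K : ℂ) = (ι (B 0) * conj (ι (B 1)) - conj (ι (B 0)) * ι (B 1)) ^ 2 := by
  obtain ⟨e, he₀, he₁⟩ := exists_equiv_fin_two_algHom hdeg hι
  have hcard : Fintype.card (Module.Free.ChooseBasisIndex ℤ (𝓞 K)) = 2 := by
    rw [← Module.finrank_eq_card_chooseBasisIndex, RingOfIntegers.rank, hdeg]
  let eqv := Fintype.equivFinOfCardEq hcard
  refine ⟨(RingOfIntegers.basis K).reindex eqv, ?_⟩
  have hdiscr : (discr K : ℚ) = Algebra.discr ℚ ((integralBasis K).reindex eqv) := by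
    rw [Module.Basis.coe_reindex, Algebra.discr_reindex, coe_discr]
  have := Algebra.discr_eq_det_embeddingsMatrixReindex_pow_two ℚ ℂ
    ((integralBasis K).reindex eqv) e
  rw [← hdiscr, eq_ratCast, Rat.cast_intCast] at this
  rw [this, Matrix.det_fin_two]
  simp [Algebra.embeddingsMatrixReindex, Algebra.embeddingsMatrix_apply, he₀, he₁]

theorem mul_conj_sub_conj_mul_eq (B : Module.Basis (Fin 2) ℤ (𝓞 K)) (x y : 𝓞 K) :
    ι x * conj (ι y) - conj (ι x) * ι y =
      ((B.repr x 0 * B.repr y 1 - B.repr x 1 * B.repr y 0 : ℤ) : ℂ) *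
        (ι (B 0) * conj (ι (B 1)) - conj (ι (B 0)) * ι (B 1)) := by
  have expand : ∀ z : 𝓞 K, ι z = B.repr z 0 * ι (B 0) + B.repr z 1 * ι (B 1) := fun z ↦ by
    conv_lhs => rw [← B.sum_repr z]
    simp [Fin.sum_univ_two]
  rw [expand x, expand y]
  simp only [map_add, map_mul, map_intCast]
  push_cast
  ring

theorem exists_sub_conj_mul_sub_conj_eq (hdeg : Module.finrank ℚ K = 2) (hι : ¬ IsReal ι)
    (x y : 𝓞 K) : ∃ p : ℤ, (ι x - conj (ι x)) * (ι y - conj (ι y)) = p * discr K := by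
  obtain ⟨B, hB⟩ := exists_basis_discr_eq_sq hdeg hι
  have sub_conj (z : 𝓞 K) :
      ι z - conj (ι z) = ι z * conj (ι (1 : 𝓞 K)) - conj (ι z) * ι (1 : 𝓞 K) := by
    simp
  rw [sub_conj x, sub_conj y, mul_conj_sub_conj_mul_eq B x, mul_conj_sub_conj_mul_eq B y,
    mul_mul_mul_comm, ← sq, ← hB, ← Int.cast_mul]
  exact ⟨_, rfl⟩

theorem exists_mul_conj_add_conj_mul_eq_mul (hdeg : Module.finrank ℚ K = 2) (hι : ¬ IsReal ι)
    {D : ℤ} (hDΔ : D ∣ discr K) {x y : 𝓞 K} (hx : D ∣ Algebra.norm ℤ x)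
    (hy : D ∣ Algebra.norm ℤ y) : ∃ t : ℤ, ι x * conj (ι y) + conj (ι x) * ι y = D * t := by
  have hnorm := mul_conj_eq_norm_int hdeg hι (ι := ι)
  set s := Algebra.norm ℤ (x + y) - Algebra.norm ℤ x - Algebra.norm ℤ y
  have hs : (s : ℂ) = ι x * conj (ι y) + conj (ι x) * ι y := by
    push_cast [s, ← hnorm, map_add]
    ring
  obtain ⟨p, hp⟩ := exists_sub_conj_mul_sub_conj_eq hdeg hι x y
  obtain ⟨q₁, hq₁⟩ := exists_sub_conj_mul_sub_conj_eq hdeg hι x x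
  obtain ⟨q₂, hq₂⟩ := exists_sub_conj_mul_sub_conj_eq hdeg hι y y
  have key : s ^ 2 + p * discr K * s = 4 * Algebra.norm ℤ x * Algebra.norm ℤ y +
      discr K * (Algebra.norm ℤ x * q₂ + Algebra.norm ℤ y * q₁) := by
    apply Int.cast_injective (α := ℂ)
    push_cast
    rw [hs, ← hnorm, ← hnorm]
    linear_combination (-(ι x * conj (ι y) + conj (ι x) * ι y)) * hp +
      (ι x * conj (ι x)) * hq₂ + (ι y * conj (ι y)) * hq₁
  obtain ⟨t, ht⟩ : D ∣ s := by
    refine dvd_of_sq_dvd_sq_add_mul (dvd_mul_of_dvd_right hDΔ p) ?_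
    obtain ⟨e, he⟩ := hDΔ
    obtain ⟨a, ha⟩ := hx
    obtain ⟨b, hb⟩ := hy
    rw [key, he, ha, hb]
    exact Dvd.intro (4 * a * b + e * (a * q₂ + b * q₁)) (by ring)
  exact ⟨t, by rw [← hs, ht, Int.cast_mul]⟩

end NumberField.ComplexEmbedding

theorem isqrt_mul_conj {s : ℝ} (hs : 0 ≤ s) : isqrt s * conj (isqrt s) = s := by
  rw [isqrt, map_mul, conj_I, conj_ofReal]
  have hsq : ((Real.sqrt s : ℝ) : ℂ) ^ 2 = s := by exact_mod_cast Real.sq_sqrt hs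
  linear_combination (-(Real.sqrt s : ℂ) ^ 2) * I_sq + hsq

section Pairing

variable {s E : ℝ} {α α' ζ ζ' : ℂ} {rhat r rhat' r' : ℝ} {m₁ m₂ m₁' m₂' : ℤ}

theorem mul_mul_eq_of_isqrt_mul_eq (hs : 0 ≤ s) (hE : 0 ≤ E) {x y : ℝ} {m n : ℤ}
    (hx : isqrt s * x = isqrt E * m) (hy : isqrt s * y = isqrt E * n) :
    (s : ℂ) * (x * y) = E * (m * n) := by
  have hy' := congrArg conj hy
  simp only [map_mul, conj_ofReal, map_intCast] at hy'
  linear_combination (conj (isqrt s) * y) * hx + (isqrt E * m) * hy' -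
    (x * y) * isqrt_mul_conj hs + (m * n) * isqrt_mul_conj hE

theorem mul_pairing_eq_of_isqrt (hs : 0 ≤ s) (hE : 0 ≤ E)
    (hα : α = isqrt s * ζ) (hα' : α' = isqrt s * ζ')
    (h₁ : isqrt s * rhat = isqrt E * m₁) (h₂ : isqrt s * r = isqrt E * m₂)
    (h₁' : isqrt s * rhat' = isqrt E * m₁') (h₂' : isqrt s * r' = isqrt E * m₂') :
    s * (ζ * conj ζ' + conj ζ * ζ' - rhat * r' - r * rhat') =
      α * conj α' + conj α * α' - E * (m₁ * m₂' + m₂ * m₁') := by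
  rw [hα, hα']
  simp only [map_mul]
  linear_combination -(ζ * conj ζ' + conj ζ * ζ') * isqrt_mul_conj hs
    - mul_mul_eq_of_isqrt_mul_eq hs hE h₁ h₂' - mul_mul_eq_of_isqrt_mul_eq hs hE h₂ h₁'

theorem mul_conj_eq_of_isqrt (hs : 0 ≤ s) (hE : 0 ≤ E) (hC : IsOrientedCircle ζ rhat r)
    (hα : α = isqrt s * ζ) (h₁ : isqrt s * rhat = isqrt E * m₁)
    (h₂ : isqrt s * r = isqrt E * m₂) :
    α * conj α = s + E * (m₁ * m₂) := by
  have hC' : ζ * conj ζ - rhat * r = 1 := by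
    rw [mul_conj]; exact_mod_cast hC
  linear_combination (-1/2 : ℂ) * mul_pairing_eq_of_isqrt hs hE hα hα h₁ h₂ h₁ h₂ + s * hC'

end Pairing

open NumberField.ComplexEmbedding in
theorem stmt_8_general (K : Type*) [Field K] [NumberField K] (ι : K →+* ℂ)
    (hdeg : Module.finrank ℚ K = 2) (him : ∃ x : K, (ι x).im ≠ 0)
    (D : ℕ) (hD : 0 < D) (hdvd : (D : ℤ) ∣ NumberField.discr K)
    (ζ : ℂ) (rhat r : ℝ) (ζ' : ℂ) (rhat' r' : ℝ)
    (hC : MemSD K ι D ζ rhat r) (hC' : MemSD K ι D ζ' rhat' r') :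
    ∃ n : ℤ,
      ζ * conj ζ' + conj ζ * ζ' - (rhat : ℂ) * (r' : ℂ) - (r : ℂ) * (rhat' : ℂ) = (n : ℂ) := by
  have hι : ¬ IsReal ι := fun h ↦ by
    obtain ⟨x, hx⟩ := him
    exact hx (conj_eq_iff_im.mp (RingHom.congr_fun h x))
  obtain ⟨hcirc, ⟨a, ha⟩, ⟨m₁, hm₁⟩, ⟨m₂, hm₂⟩⟩ := hC
  obtain ⟨hcirc', ⟨a', ha'⟩, ⟨m₁', hm₁'⟩, ⟨m₂', hm₂'⟩⟩ := hC'
  have hD₀ : (0 : ℝ) ≤ D := D.cast_nonneg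
  have hΔ₀ : (0 : ℝ) ≤ |(discr K : ℝ)| := abs_nonneg _
  obtain ⟨e, he⟩ : (D : ℤ) ∣ |discr K| := (dvd_abs _ _).mpr hdvd
  have hnorm {b : 𝓞 K} {m n : ℤ} (h : ι b * conj (ι b) = D + |(discr K : ℝ)| * (m * n)) :
      (D : ℤ) ∣ Algebra.norm ℤ b := by
    rw [mul_conj_eq_norm_int hdeg hι] at h
    have h' : Algebra.norm ℤ b = D + |discr K| * (m * n) := by exact_mod_cast h
    exact ⟨1 + e * (m * n), by rw [h', he]; ring⟩
  obtain ⟨t, ht⟩ := exists_mul_conj_add_conj_mul_eq_mul hdeg hι hdvd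
    (hnorm (mul_conj_eq_of_isqrt hD₀ hΔ₀ hcirc ha hm₁ hm₂))
    (hnorm (mul_conj_eq_of_isqrt hD₀ hΔ₀ hcirc' ha' hm₁' hm₂'))
  have hpair := mul_pairing_eq_of_isqrt hD₀ hΔ₀ ha ha' hm₁ hm₂ hm₁' hm₂'
  have he' : ((|(discr K : ℝ)| : ℝ) : ℂ) = D * e := by exact_mod_cast he
  refine ⟨t - e * (m₁ * m₂' + m₂ * m₁'), mul_left_cancel₀ (Nat.cast_ne_zero.mpr hD.ne') ?_⟩
  push_cast at hpair ht ⊢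
  linear_combination hpair + ht - (m₁ * m₂' + m₂ * m₁' : ℂ) * he'

theorem stmt_8 (K : Type*) [Field K] [NumberField K] (ι : K →+* ℂ)
    (hdeg : Module.finrank ℚ K = 2) (him : ∃ x : K, (ι x).im ≠ 0)
    (hΔ : NumberField.discr K < 0)
    (D : ℕ) (hD : 0 < D) (hdvd : (D : ℤ) ∣ NumberField.discr K)
    (ζ : ℂ) (rhat r : ℝ) (ζ' : ℂ) (rhat' r' : ℝ)
    (hC : MemSD K ι D ζ rhat r) (hC' : MemSD K ι D ζ' rhat' r') :
    ∃ n : ℤ,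
      ζ * conj ζ' + conj ζ * ζ' - (rhat : ℂ) * (r' : ℂ) - (r : ℂ) * (rhat' : ℂ) = (n : ℂ) :=
  stmt_8_general K ι hdeg him D hD hdvd ζ rhat r ζ' rhat' r' hC hC'
end
end
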